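/- arXiv:1205.3362 — 2 statements merged into one kernel-verified Lean document; each statement's English description precedes it below -/
import Mathlib

section
/- Let U : ℝ² → [0,∞) be continuous with U(x) = u₀(x/|x|)|x|^{-α}(1+o(1)) as |x| → ∞, where α > 0 and u₀ ∈ C(S¹) with u₀ > 0. Then as s ↓ 0, the Lebesgue measure |{x ∈ ℝ² : U(x) > s}| = s^{-2/α} (1/2)∫_{S¹} u₀(t)^{2/α} dt · (1 + o(1)). -/
/-!
The profile `F x = u₀(x/|x|) |x|^{-α}` is positively homogeneous of degree `-α`, so its
superlevel sets are dilates of each other: `|{F > s}| = s^{-d/α} |{F > 1}|` in dimension `d`.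
Outside a large ball `(1 - ε) F ≤ U ≤ (1 + ε) F`, and the ball contributes only `O(1)`, which is
`o(s^{-d/α})`; letting `ε → 0` gives `|{U > s}| ~ s^{-d/α} |{F > 1}|`. In the plane `{F > 1}` is
the star-shaped region `r < u₀(θ)^{1/α}`, whose area in polar coordinates is `½ ∫ u₀^{2/α} dθ`.
-/

open MeasureTheory Filter Real Set Topology Module
open scoped Pointwise

theorem tendsto_of_squeeze_family {ι β γ : Type*} [TopologicalSpace γ] [Preorder γ]
    [OrderTopology γ] {L : Filter ι} [L.NeBot] {l : Filter β} {f : β → γ} {lo hi : ι → γ}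
    {a : γ} (hlo : Tendsto lo L (𝓝 a)) (hhi : Tendsto hi L (𝓝 a))
    (h : ∀ᶠ i in L, ∀ᶠ x in l, f x ∈ Icc (lo i) (hi i)) : Tendsto f l (𝓝 a) := by
  refine tendsto_order.2 ⟨fun b hb => ?_, fun b hb => ?_⟩
  · obtain ⟨i, hi, hbi⟩ := (h.and (hlo.eventually (lt_mem_nhds hb))).exists
    exact hi.mono fun x hx => hbi.trans_le hx.1
  · obtain ⟨i, hi, hbi⟩ := (h.and (hhi.eventually (gt_mem_nhds hb))).exists
    exact hi.mono fun x hx => hx.2.trans_lt hbi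

section Homogeneous

variable {E : Type*} [NormedAddCommGroup E] [NormedSpace ℝ E] {α : ℝ} {F : E → ℝ}

def IsPosHomogeneous (F : E → ℝ) (β : ℝ) : Prop :=
  ∀ t : ℝ, 0 < t → ∀ x, F (t • x) = t ^ β * F x

theorem setOf_lt_eq_smul_of_isPosHomogeneous (hF : IsPosHomogeneous F (-α))
    (hα : 0 < α) {s : ℝ} (hs : 0 < s) : {x | s < F x} = s ^ (-α⁻¹) • {x | 1 < F x} := by
  ext y
  have hscale : (s ^ α⁻¹) ^ (-α) = s⁻¹ := by
    rw [← rpow_mul hs.le, mul_neg, inv_mul_cancel₀ hα.ne', rpow_neg_one]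
  rw [mem_smul_set_iff_inv_smul_mem₀ (rpow_pos_of_pos hs _).ne', ← rpow_neg hs.le, neg_neg,
    mem_ofPred_eq, mem_ofPred_eq, hF _ (rpow_pos_of_pos hs _), hscale, ← div_eq_inv_mul,
    one_lt_div hs]

variable [FiniteDimensional ℝ E] [MeasurableSpace E] [BorelSpace E] (μ : Measure E)
  [μ.IsAddHaarMeasure]

theorem measure_setOf_lt_of_isPosHomogeneous (hF : IsPosHomogeneous F (-α))
    (hα : 0 < α) {s : ℝ} (hs : 0 < s) :
    μ {x | s < F x} = ENNReal.ofReal (s ^ (-(finrank ℝ E / α))) * μ {x | 1 < F x} := by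
  rw [setOf_lt_eq_smul_of_isPosHomogeneous hF hα hs,
    Measure.addHaar_smul_of_nonneg μ (by positivity), ← rpow_natCast, ← rpow_mul hs.le]
  congr 3
  ring

theorem measure_setOf_lt_const_mul_of_isPosHomogeneous (hF : IsPosHomogeneous F (-α)) (hα : 0 < α)
    {c s : ℝ} (hc : 0 < c) (hs : 0 < s) :
    μ {x | s < c * F x} = ENNReal.ofReal ((s / c) ^ (-(finrank ℝ E / α))) * μ {x | 1 < F x} := by
  have hset : {x | s < c * F x} = {x | s / c < F x} := by
    ext x
    rw [mem_ofPred_eq, mem_ofPred_eq, div_lt_iff₀' hc]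
  rw [hset, measure_setOf_lt_of_isPosHomogeneous μ hF hα (div_pos hs hc)]

theorem measureReal_setOf_lt_const_mul_div (hF : IsPosHomogeneous F (-α))
    (hα : 0 < α) {c s : ℝ} (hc : 0 < c) (hs : 0 < s) :
    μ.real {x | s < c * F x} / s ^ (-(finrank ℝ E / α)) =
      c ^ (finrank ℝ E / α) * μ.real {x | 1 < F x} := by
  rw [measureReal_def, measure_setOf_lt_const_mul_of_isPosHomogeneous μ hF hα hc hs,
    ENNReal.toReal_mul, ENNReal.toReal_ofReal (by positivity), ← measureReal_def,
    div_rpow hs.le hc.le, rpow_neg hc.le, rpow_neg hs.le]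
  field_simp

theorem setOf_lt_subset_union {X : Type*} {U G : X → ℝ} {K : Set X} (s : ℝ)
    (h : ∀ x ∉ K, U x ≤ G x) : {x | s < U x} ⊆ K ∪ {x | s < G x} := by
  intro x hx
  by_cases hxK : x ∈ K
  · exact Or.inl hxK
  · exact Or.inr (lt_of_lt_of_le hx (h x hxK))

variable [Nontrivial E]

theorem eventually_measureReal_setOf_lt_div_rpow_mem_Icc (hF : IsPosHomogeneous F (-α))
    (hα : 0 < α) (hfin : μ {x | 1 < F x} ≠ ⊤) {U : E → ℝ} {ε R : ℝ} (hε : ε ∈ Ioo 0 1)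
    (hR : ∀ x, R ≤ ‖x‖ → |U x - F x| ≤ ε * F x) :
    ∀ᶠ s in 𝓝[>] 0, μ.real {x | s < U x} / s ^ (-(finrank ℝ E / α)) ∈
      Icc ((1 - ε) ^ (finrank ℝ E / α) * μ.real {x | 1 < F x} - ε)
        ((1 + ε) ^ (finrank ℝ E / α) * μ.real {x | 1 < F x} + ε) := by
  set d := (finrank ℝ E : ℝ) / α
  set K := Metric.closedBall (0 : E) R
  have hK : μ K ≠ ⊤ := measure_closedBall_lt_top.ne
  have hfin' {c s : ℝ} (hc : 0 < c) (hs : 0 < s) : μ {x | s < c * F x} ≠ ⊤ := by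
    rw [measure_setOf_lt_const_mul_of_isPosHomogeneous μ hF hα hc hs]
    exact ENNReal.mul_ne_top ENNReal.ofReal_ne_top hfin
  have hR' : ∀ x ∉ K, |U x - F x| ≤ ε * F x := fun x hx =>
    hR x (by simpa [K] using hx : R < ‖x‖).le
  have hd : 0 < d := div_pos (Nat.cast_pos.2 finrank_pos) hα
  have hKs : Tendsto (fun s : ℝ => μ.real K / s ^ (-d)) (𝓝[>] 0) (𝓝 0) :=
    tendsto_const_nhds.div_atTop (tendsto_rpow_neg_nhdsGT_zero (neg_neg_of_pos hd))
  filter_upwards [self_mem_nhdsWithin, hKs.eventually (ge_mem_nhds hε.1)] with s hs hKs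
  have hs : 0 < s := hs
  have hup : {x | s < U x} ⊆ K ∪ {x | s < (1 + ε) * F x} :=
    setOf_lt_subset_union s fun x hx => by linarith [(abs_le.1 (hR' x hx)).2]
  have hdown : {x | s < (1 - ε) * F x} ⊆ K ∪ {x | s < U x} :=
    setOf_lt_subset_union s fun x hx => by linarith [(abs_le.1 (hR' x hx)).1]
  have hupfin : μ (K ∪ {x | s < (1 + ε) * F x}) ≠ ⊤ :=
    measure_union_ne_top hK (hfin' (by linarith [hε.1]) hs)
  have hUfin : μ {x | s < U x} ≠ ⊤ := measure_ne_top_of_subset hup hupfin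
  constructor
  · calc (1 - ε) ^ d * μ.real {x | 1 < F x} - ε
        = μ.real {x | s < (1 - ε) * F x} / s ^ (-d) - ε := by
          rw [measureReal_setOf_lt_const_mul_div μ hF hα (by linarith [hε.2]) hs]
      _ ≤ (μ.real K + μ.real {x | s < U x}) / s ^ (-d) - ε := by
          gcongr
          exact (measureReal_mono hdown (measure_union_ne_top hK hUfin)).trans
            (measureReal_union_le _ _)
      _ ≤ μ.real {x | s < U x} / s ^ (-d) := by rw [add_div]; linarith
  · calc μ.real {x | s < U x} / s ^ (-d)
        ≤ (μ.real K + μ.real {x | s < (1 + ε) * F x}) / s ^ (-d) := by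
          gcongr
          exact (measureReal_mono hup hupfin).trans (measureReal_union_le _ _)
      _ ≤ (1 + ε) ^ d * μ.real {x | 1 < F x} + ε := by
          rw [add_div, measureReal_setOf_lt_const_mul_div μ hF hα (by linarith [hε.1]) hs]
          linarith

theorem tendsto_measureReal_setOf_lt_div_rpow (hF : IsPosHomogeneous F (-α))
    (hα : 0 < α) (hfin : μ {x | 1 < F x} ≠ ⊤) {U : E → ℝ}
    (hU : ∀ ε > 0, ∃ R, ∀ x, R ≤ ‖x‖ → |U x - F x| ≤ ε * F x) :
    Tendsto (fun s => μ.real {x | s < U x} / s ^ (-(finrank ℝ E / α))) (𝓝[>] 0)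
      (𝓝 (μ.real {x | 1 < F x})) := by
  set d := (finrank ℝ E : ℝ) / α
  set m := μ.real {x | 1 < F x}
  have hd : 0 ≤ d := div_nonneg (Nat.cast_nonneg _) hα.le
  have hbound (σ : ℝ) : Tendsto (fun ε : ℝ => (1 + σ * ε) ^ d * m + σ * ε) (𝓝[>] 0) (𝓝 m) := by
    have hcont : Continuous fun ε : ℝ => (1 + σ * ε) ^ d * m + σ * ε := by
      fun_prop (disch := exact Or.inr hd)
    simpa using hcont.continuousWithinAt.tendsto (x := 0) (s := Ioi 0)
  refine tendsto_of_squeeze_family (by simpa using hbound (-1)) (by simpa using hbound 1) ?_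
  filter_upwards [Ioo_mem_nhdsGT one_pos] with ε hε
  obtain ⟨R, hR⟩ := hU ε hε.1
  exact eventually_measureReal_setOf_lt_div_rpow_mem_Icc μ hF hα hfin hε hR

end Homogeneous

section Angular

variable {E : Type*} [NormedAddCommGroup E] [NormedSpace ℝ E]

theorem isPosHomogeneous_angular_mul_norm_rpow (u₀ : E → ℝ) (α : ℝ) :
    IsPosHomogeneous (fun x => u₀ (‖x‖⁻¹ • x) * ‖x‖ ^ (-α)) (-α) := fun t ht x => by
  dsimp only
  rw [norm_smul, norm_of_nonneg ht.le, smul_smul, mul_inv_rev, inv_mul_cancel_right₀ ht.ne',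
    mul_rpow ht.le (norm_nonneg x)]
  ring

def starRegion (ρ : E → ℝ) : Set E :=
  {x | x ≠ 0 ∧ ‖x‖ < ρ (‖x‖⁻¹ • x)}

theorem smul_mem_starRegion_iff {ρ : E → ℝ} {r : ℝ} (hr : 0 < r) {u : E} (hu : ‖u‖ = 1) :
    r • u ∈ starRegion ρ ↔ r < ρ u := by
  have hnorm : ‖r • u‖ = r := by rw [norm_smul, hu, mul_one, norm_of_nonneg hr.le]
  have hx : r • u ≠ 0 := norm_pos_iff.1 (hnorm.symm ▸ hr)
  change _ ∧ _ < ρ _ ↔ _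
  rw [hnorm, inv_smul_smul₀ hr.ne']
  exact ⟨And.right, And.intro hx⟩

theorem setOf_one_lt_angular_mul_norm_rpow {α : ℝ} (hα : 0 < α) {u₀ : E → ℝ}
    (hu₀ : ∀ x, ‖x‖ = 1 → 0 < u₀ x) :
    {x | 1 < u₀ (‖x‖⁻¹ • x) * ‖x‖ ^ (-α)} = starRegion fun u => u₀ u ^ α⁻¹ := by
  ext x
  rcases eq_or_ne x 0 with rfl | hx
  · simp [starRegion, zero_rpow (neg_ne_zero.2 hα.ne')]
  have hn : 0 < ‖x‖ := norm_pos_iff.2 hx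
  have hu : 0 < u₀ (‖x‖⁻¹ • x) := hu₀ _ (norm_smul_inv_norm hx)
  change (1 : ℝ) < _ ↔ x ≠ 0 ∧ _
  rw [rpow_neg hn.le, ← div_eq_mul_inv, one_lt_div (rpow_pos_of_pos hn α),
    ← lt_rpow_inv_iff_of_pos hn.le hu.le hα]
  exact (and_iff_right hx).symm

end Angular

theorem lintegral_Ioi_indicator_Iio_ofReal {a : ℝ} (ha : 0 ≤ a) :
    ∫⁻ r in Ioi 0, (Iio a).indicator ENNReal.ofReal r = ENNReal.ofReal (a ^ 2 / 2) := by
  have hint : IntegrableOn (fun r : ℝ => r) (Ioo 0 a) :=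
    continuous_id.integrableOn_Icc.mono_set Ioo_subset_Icc_self
  rw [lintegral_indicator measurableSet_Iio, Measure.restrict_restrict measurableSet_Iio,
    Iio_inter_Ioi, ← ofReal_integral_eq_lintegral_ofReal hint
      ((ae_restrict_mem measurableSet_Ioo).mono fun r hr => hr.1.le),
    ← integral_Ioc_eq_integral_Ioo, ← intervalIntegral.integral_of_le ha, integral_id]
  norm_num

theorem Function.Periodic.setIntegral_Ioo_neg_pi_pi {f : ℝ → ℝ} (hf : f.Periodic (2 * π)) :
    ∫ θ in Ioo (-π) π, f θ = ∫ θ in 0..2 * π, f θ := by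
  rw [← integral_Ioc_eq_integral_Ioo, ← intervalIntegral.integral_of_le (by linarith [pi_pos])]
  simpa [show -π + 2 * π = π by ring] using hf.intervalIntegral_add_eq (-π) 0

noncomputable def unitVec (θ : ℝ) : EuclideanSpace ℝ (Fin 2) := WithLp.toLp 2 ![cos θ, sin θ]

theorem norm_unitVec (θ : ℝ) : ‖unitVec θ‖ = 1 := by
  simp [unitVec, EuclideanSpace.norm_eq, Fin.sum_univ_two]

theorem continuous_unitVec : Continuous unitVec :=
  (PiLp.continuous_toLp 2 _).comp (continuous_pi fun i => by fin_cases i <;> dsimp <;> fun_prop)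

theorem unitVec_periodic : unitVec.Periodic (2 * π) := fun θ => by
  simp [unitVec, cos_add_two_pi, sin_add_two_pi]

noncomputable def EuclideanSpace.finTwoEquivProd : EuclideanSpace ℝ (Fin 2) ≃ᵐ ℝ × ℝ :=
  (MeasurableEquiv.toLp 2 (Fin 2 → ℝ)).symm.trans MeasurableEquiv.finTwoArrow

theorem EuclideanSpace.volume_preserving_finTwoEquivProd :
    MeasurePreserving finTwoEquivProd volume volume :=
  (volume_preserving_symm_measurableEquiv_toLp (Fin 2)).trans (volume_preserving_finTwoArrow ℝ)

theorem EuclideanSpace.finTwoEquivProd_symm_polarCoord_symm (p : ℝ × ℝ) :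
    finTwoEquivProd.symm (polarCoord.symm p) = p.1 • unitVec p.2 := by
  ext i
  fin_cases i <;> rfl

theorem polarCoord_symm_mem_starRegion_iff (ρ : EuclideanSpace ℝ (Fin 2) → ℝ) {r : ℝ}
    (hr : 0 < r) (θ : ℝ) :
    polarCoord.symm (r, θ) ∈ EuclideanSpace.finTwoEquivProd.symm ⁻¹' starRegion ρ ↔
      r < ρ (unitVec θ) := by
  rw [mem_preimage, EuclideanSpace.finTwoEquivProd_symm_polarCoord_symm]
  exact smul_mem_starRegion_iff hr (norm_unitVec θ)

open EuclideanSpace in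
theorem volume_starRegion (ρ : EuclideanSpace ℝ (Fin 2) → ℝ) (hρ : Continuous ρ)
    (hρ0 : ∀ θ, 0 ≤ ρ (unitVec θ)) :
    volume (starRegion ρ) = ENNReal.ofReal ((1 / 2) * ∫ θ in 0..2 * π, ρ (unitVec θ) ^ 2) := by
  have hS : MeasurableSet (starRegion ρ) := (measurableSet_singleton 0).compl.inter
    (measurableSet_lt measurable_norm (hρ.measurable.comp (measurable_norm.inv.smul measurable_id)))
  have hpolar : ∀ p ∈ polarCoord.target,
      ENNReal.ofReal p.1 • (finTwoEquivProd.symm ⁻¹' starRegion ρ).indicator 1 (polarCoord.symm p)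
        = (Iio (ρ (unitVec p.2))).indicator ENNReal.ofReal p.1 := by
    rintro ⟨r, θ⟩ ⟨hr, -⟩
    have hmem := polarCoord_symm_mem_starRegion_iff ρ hr θ
    dsimp only
    by_cases h : r < ρ (unitVec θ)
    · rw [indicator_of_mem (hmem.2 h), indicator_of_mem (mem_Iio.2 h), Pi.one_apply, smul_eq_mul,
        mul_one]
    · rw [indicator_of_notMem (mt hmem.1 h), indicator_of_notMem (mt mem_Iio.1 h), smul_zero]
  have hmeas : Measurable fun p : ℝ × ℝ => (Iio (ρ (unitVec p.2))).indicator ENNReal.ofReal p.1 :=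
    (ENNReal.measurable_ofReal.comp measurable_fst).indicator
      (measurableSet_lt measurable_fst
        ((hρ.comp continuous_unitVec).measurable.comp measurable_snd))
  have hint : IntegrableOn (fun θ => ρ (unitVec θ) ^ 2 / 2) (Ioo (-π) π) :=
    (((hρ.comp continuous_unitVec).pow 2).div_const 2).integrableOn_Icc.mono_set Ioo_subset_Icc_self
  have hper : Function.Periodic (fun θ => ρ (unitVec θ) ^ 2 / 2) (2 * π) := fun θ => by
    simp only [unitVec_periodic θ]
  calc volume (starRegion ρ) = volume (finTwoEquivProd.symm ⁻¹' starRegion ρ) :=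
        (volume_preserving_finTwoEquivProd.symm.measure_preimage_equiv _).symm
    _ = ∫⁻ p, (finTwoEquivProd.symm ⁻¹' starRegion ρ).indicator 1 p :=
        (lintegral_indicator_one (hS.preimage finTwoEquivProd.symm.measurable)).symm
    _ = ∫⁻ p in polarCoord.target, (Iio (ρ (unitVec p.2))).indicator ENNReal.ofReal p.1 := by
        rw [← lintegral_comp_polarCoord_symm]
        exact setLIntegral_congr_fun polarCoord.open_target.measurableSet hpolar
    _ = ∫⁻ θ in Ioo (-π) π, ∫⁻ r in Ioi 0, (Iio (ρ (unitVec θ))).indicator ENNReal.ofReal r := by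
        rw [polarCoord_target, Measure.volume_eq_prod, ← Measure.prod_restrict,
          lintegral_prod_symm _ hmeas.aemeasurable]
    _ = ∫⁻ θ in Ioo (-π) π, ENNReal.ofReal (ρ (unitVec θ) ^ 2 / 2) := by
        simp_rw [lintegral_Ioi_indicator_Iio_ofReal (hρ0 _)]
    _ = ENNReal.ofReal ((1 / 2) * ∫ θ in 0..2 * π, ρ (unitVec θ) ^ 2) := by
        rw [← ofReal_integral_eq_lintegral_ofReal hint (ae_of_all _ fun θ => by positivity),
          hper.setIntegral_Ioo_neg_pi_pi, intervalIntegral.integral_div]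
        ring_nf

theorem volume_setOf_one_lt_angular_mul_norm_rpow {α : ℝ} (hα : 0 < α)
    {u₀ : EuclideanSpace ℝ (Fin 2) → ℝ} (hu₀ : Continuous u₀)
    (hu₀pos : ∀ x, ‖x‖ = 1 → 0 < u₀ x) :
    volume {x : EuclideanSpace ℝ (Fin 2) | 1 < u₀ (‖x‖⁻¹ • x) * ‖x‖ ^ (-α)} =
      ENNReal.ofReal ((1 / 2) * ∫ θ in 0..2 * π, u₀ (unitVec θ) ^ (2 / α)) := by
  rw [setOf_one_lt_angular_mul_norm_rpow hα hu₀pos,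
    volume_starRegion _ (hu₀.rpow_const fun _ => Or.inr (inv_nonneg.2 hα.le))
      fun θ => rpow_nonneg (hu₀pos _ (norm_unitVec θ)).le _]
  congr 3 with θ
  rw [← rpow_natCast, ← rpow_mul (hu₀pos _ (norm_unitVec θ)).le]
  congr 1
  field_simp
  norm_num

theorem superlevel_measure_asymptotics_general (α : ℝ) (hα : 0 < α)
    (U : EuclideanSpace ℝ (Fin 2) → ℝ) (u₀ : EuclideanSpace ℝ (Fin 2) → ℝ)
    (hu₀ : Continuous u₀) (hu₀pos : ∀ x, ‖x‖ = 1 → 0 < u₀ x)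
    (hasym : ∀ ε > (0 : ℝ), ∃ R : ℝ, ∀ x : EuclideanSpace ℝ (Fin 2), R ≤ ‖x‖ →
      |U x - u₀ (‖x‖⁻¹ • x) * ‖x‖ ^ (-α)| ≤ ε * (u₀ (‖x‖⁻¹ • x) * ‖x‖ ^ (-α))) :
    Tendsto
      (fun s : ℝ =>
        (volume {x : EuclideanSpace ℝ (Fin 2) | s < U x}).toReal / s ^ (-(2 / α)))
      (nhdsWithin 0 (Set.Ioi 0))
      (nhds ((1 / 2) * ∫ θ in (0 : ℝ)..(2 * Real.pi),
        (u₀ (WithLp.toLp 2 ![Real.cos θ, Real.sin θ] : EuclideanSpace ℝ (Fin 2))) ^ (2 / α))) := by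
  have hvol := volume_setOf_one_lt_angular_mul_norm_rpow hα hu₀ hu₀pos
  have hI : 0 ≤ (1 / 2) * ∫ θ in 0..2 * π, u₀ (unitVec θ) ^ (2 / α) :=
    mul_nonneg (by norm_num) (intervalIntegral.integral_nonneg two_pi_pos.le
      fun θ _ => rpow_nonneg (hu₀pos _ (norm_unitVec θ)).le _)
  have h := tendsto_measureReal_setOf_lt_div_rpow volume
    (isPosHomogeneous_angular_mul_norm_rpow u₀ α) hα
    (hvol ▸ ENNReal.ofReal_ne_top) hasym
  rw [finrank_euclideanSpace_fin, measureReal_def, hvol, ENNReal.toReal_ofReal hI] at h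
  exact_mod_cast h

/-- If `U ≥ 0` on `ℝ²` satisfies `U(x) = u₀(x/|x|)|x|^{-α}(1+o(1))` uniformly as
`|x| → ∞`, with `u₀ > 0` continuous on the circle, then as `s ↓ 0`,
`|{U > s}| = s^{-2/α} (1/2)∫_{S¹} u₀^{2/α} dt (1+o(1))`. -/
theorem superlevel_measure_asymptotics (α : ℝ) (hα : 0 < α)
    (U : EuclideanSpace ℝ (Fin 2) → ℝ) (u₀ : EuclideanSpace ℝ (Fin 2) → ℝ)
    (hU : Continuous U) (hUpos : ∀ x, 0 ≤ U x)
    (hu₀ : Continuous u₀) (hu₀pos : ∀ x, ‖x‖ = 1 → 0 < u₀ x)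
    (hasym : ∀ ε > (0 : ℝ), ∃ R : ℝ, ∀ x : EuclideanSpace ℝ (Fin 2), R ≤ ‖x‖ →
      |U x - u₀ (‖x‖⁻¹ • x) * ‖x‖ ^ (-α)| ≤ ε * (u₀ (‖x‖⁻¹ • x) * ‖x‖ ^ (-α))) :
    Tendsto
      (fun s : ℝ =>
        (volume {x : EuclideanSpace ℝ (Fin 2) | s < U x}).toReal / s ^ (-(2 / α)))
      (nhdsWithin 0 (Set.Ioi 0))
      (nhds ((1 / 2) * ∫ θ in (0 : ℝ)..(2 * Real.pi),
        (u₀ (WithLp.toLp 2 ![Real.cos θ, Real.sin θ] : EuclideanSpace ℝ (Fin 2))) ^ (2 / α))) :=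
  superlevel_measure_asymptotics_general α hα U u₀ hu₀ hu₀pos hasym
end

section
/- Let T be a Hilbert–Schmidt operator on a Hilbert space with eigenvalues (λ_n) counted with multiplicity. Then -1 is an eigenvalue of T if and only if det₂(I + T) = 0, where det₂(I + T) = ∏_n (1 + λ_n)e^{-λ_n} (the product converging absolutely). -/
/-!
Where no factor vanishes, `(1 + z) e^{-z} = exp (log (1 + z) - z)` and `log (1 + z) - z = O(z²)`
near `0`, so square-summability of the eigenvalues makes the series of logarithms converge and
the product tends to the exponential of its sum, which is nonzero. A factor with `λ_n = -1`
makes all later partial products vanish.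
-/

open Filter Topology

lemma tendsto_cofinite_zero_of_summable_norm_sq {ι E : Type*} [SeminormedAddCommGroup E]
    {f : ι → E} (hf : Summable fun i ↦ ‖f i‖ ^ 2) : Tendsto f cofinite (𝓝 0) := by
  rw [tendsto_zero_iff_norm_tendsto_zero]
  simpa [Real.sqrt_sq (norm_nonneg _)] using hf.tendsto_cofinite_zero.sqrt

namespace Complex

variable {ι : Type*} {f : ι → ℂ}

lemma summable_log_one_add_sub_self (hf : Summable fun i ↦ ‖f i‖ ^ 2) :
    Summable fun i ↦ log (1 + f i) - f i :=
  summable_of_isBigO hf <| by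
    simpa only [Function.comp_def, norm_pow] using
      (log_sub_self_isBigO.comp_tendsto (tendsto_cofinite_zero_of_summable_norm_sq hf)).norm_right

lemma hasProd_one_add_mul_exp_neg (hf : Summable fun i ↦ ‖f i‖ ^ 2) (hne : ∀ i, f i ≠ -1) :
    HasProd (fun i ↦ (1 + f i) * exp (-f i)) (exp (∑' i, (log (1 + f i) - f i))) :=
  (summable_log_one_add_sub_self hf).hasSum.cexp.congr_fun fun i ↦ by
    rw [Function.comp_apply, sub_eq_add_neg, exp_add,
      exp_log fun h ↦ hne i (eq_neg_of_add_eq_zero_right h)]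

lemma multipliable_one_add_mul_exp_neg (hf : Summable fun i ↦ ‖f i‖ ^ 2) :
    Multipliable fun i ↦ (1 + f i) * exp (-f i) := by
  by_cases! h : ∃ i, f i = -1
  · obtain ⟨i, hi⟩ := h
    exact multipliable_of_exists_eq_zero ⟨i, by simp [hi]⟩
  · exact (hasProd_one_add_mul_exp_neg hf h).multipliable

lemma tprod_one_add_mul_exp_neg_eq_zero_iff (hf : Summable fun i ↦ ‖f i‖ ^ 2) :
    ∏' i, (1 + f i) * exp (-f i) = 0 ↔ ∃ i, f i = -1 := by
  by_cases! h : ∃ i, f i = -1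
  · obtain ⟨i, hi⟩ := h
    exact iff_of_true (tprod_of_exists_eq_zero ⟨i, by simp [hi]⟩) ⟨i, hi⟩
  · simpa [(hasProd_one_add_mul_exp_neg hf h).tprod_eq] using h

end Complex

/-- For a Hilbert–Schmidt operator with eigenvalue sequence `(λ_n)` (so `∑ |λ_n|² < ∞`),
the regularized determinant `det₂(I+T) = ∏ (1+λ_n)e^{-λ_n}` converges, and it vanishes
if and only if `-1` is an eigenvalue, i.e. some `λ_n = -1`. -/
theorem det2_eq_zero_iff_neg_one_eigenvalue (lam : ℕ → ℂ)
    (hHS : Summable fun n => ‖lam n‖ ^ 2) :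
    ∃ P : ℂ,
      Tendsto (fun N => ∏ n ∈ Finset.range N, (1 + lam n) * Complex.exp (-lam n))
        atTop (nhds P) ∧
      (P = 0 ↔ ∃ n, lam n = -1) :=
  ⟨_, (Complex.multipliable_one_add_mul_exp_neg hHS).tendsto_prod_tprod_nat,
    Complex.tprod_one_add_mul_exp_neg_eq_zero_iff hHS⟩
end
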